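/- Let x be an element of a matroid M that is not a loop. If F is a pnc-flat of the deletion M∖x, then exactly one of F and F ∪ {x} is a pnc-flat of M. Likewise, if F is a pnc-flat of the contraction M/x, then exactly one of F and F ∪ {x} is a pnc-flat of M. -/

import Mathlib

open Matroid Set

namespace Matroid

variable {α : Type*}

/-- Deletion of a set of elements from a matroid. -/
def del (M : Matroid α) (D : Set α) : Matroid α := M ↾ (M.E \ D)

/-- Contraction of a set of elements, defined via duality: `M ／ C = (M✶ ＼ C)✶`. -/
def con (M : Matroid α) (C : Set α) : Matroid α := (M✶.del C)✶

/-- `N` is a minor of `M` if `N` arises from `M` by a contraction followed by a deletion. -/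
def IsMinorOf (N M : Matroid α) : Prop :=
  ∃ C D : Set α, Disjoint C D ∧ N = (M.con C).del D

/-- A circuit is a minimal dependent set. -/
def IsCircuit' (M : Matroid α) (C : Set α) : Prop :=
  M.Dep C ∧ ∀ D, M.Dep D → D ⊆ C → D = C

/-- A spanning circuit is a circuit whose closure is the ground set. -/
def IsSpanningCircuit (M : Matroid α) (C : Set α) : Prop :=
  M.IsCircuit' C ∧ M.Spanning C

/-- Two elements of a matroid are connected if they are equal or lie on a common circuit. -/
def ConnTo (M : Matroid α) (x y : α) : Prop :=
  (x = y ∧ x ∈ M.E) ∨ ∃ C, M.IsCircuit' C ∧ x ∈ C ∧ y ∈ C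

/-- A matroid is connected if its ground set is nonempty and every two elements of the
ground set are connected. -/
def IsConnected (M : Matroid α) : Prop :=
  M.E.Nonempty ∧ ∀ ⦃x y : α⦄, x ∈ M.E → y ∈ M.E → M.ConnTo x y

/-- A loop: an element whose singleton is dependent. -/
def IsLoop' (M : Matroid α) (x : α) : Prop := x ∈ M.E ∧ ¬ M.Indep {x}

/-- The rank of a set `X` in a matroid: the maximum cardinality of an independent
subset of `X` (for finite matroids). -/
noncomputable def rkOf (M : Matroid α) (X : Set α) : ℕ :=
  sSup {k | ∃ I ⊆ X, M.Indep I ∧ I.ncard = k}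

/-- The nullity of a set `X`: `η(X) = |X| − r(X)`. -/
noncomputable def etaOf (M : Matroid α) (X : Set α) : ℕ := X.ncard - M.rkOf X

/-- A flat is connected if the corresponding restriction is a connected matroid. -/
def ConnectedFlat (M : Matroid α) (F : Set α) : Prop :=
  M.IsFlat F ∧ (M ↾ F).IsConnected

/-- A pnc-flat: a proper nontrivial (i.e. dependent) connected flat. -/
def PncFlat (M : Matroid α) (F : Set α) : Prop :=
  M.IsFlat F ∧ F ⊂ M.E ∧ M.Dep F ∧ (M ↾ F).IsConnected

/-- A fundamental flat: a pnc-flat `F` such that `F ∩ C` is a basis of `F`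
for some spanning circuit `C` of the matroid. -/
def FundFlat (M : Matroid α) (F : Set α) : Prop :=
  M.PncFlat F ∧ ∃ C, M.IsSpanningCircuit C ∧ M.IsBasis (F ∩ C) F

end Matroid

/-- `X` is a partial transversal of the family `J`. -/
def IsPartialTransversal {α : Type*} {r : ℕ} (J : Fin r → Set α) (X : Set α) : Prop :=
  ∃ f : α → Fin r, Set.InjOn f X ∧ ∀ x ∈ X, x ∈ J (f x)

/-- The family `J` is a presentation of the transversal matroid `M`: a set `X ⊆ E(M)` is
independent in `M` iff it is a partial transversal of `J`. -/
def IsPresentationOf {α : Type*} {r : ℕ} (J : Fin r → Set α) (M : Matroid α) : Prop :=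
  (∀ i, J i ⊆ M.E) ∧ ∀ X ⊆ M.E, (M.Indep X ↔ IsPartialTransversal J X)

/-- An interval presentation of `M` with respect to a path order: `e` enumerates the ground
set in the path order, and the presentation consists of the intervals `[a i, b i]`, where
the `a i` are strictly increasing, the `b i` are strictly increasing and `a i ≤ b i`. -/
structure IntervalPres {α : Type*} (M : Matroid α) (n r : ℕ) where
  e : Fin n → α
  inj : Function.Injective e
  ground : Set.range e = M.E
  a : Fin r → Fin n
  b : Fin r → Fin n
  ha : StrictMono a
  hb : StrictMono b
  hab : ∀ i, a i ≤ b i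
  pres : IsPresentationOf (fun i => e '' Set.Icc (a i) (b i)) M

/-- The `i`-th interval of an interval presentation. -/
def IntervalPres.J {α : Type*} {M : Matroid α} {n r : ℕ}
    (P : IntervalPres M n r) (i : Fin r) : Set α :=
  P.e '' Set.Icc (P.a i) (P.b i)

/-- A lattice path matroid: a matroid admitting an interval presentation. -/
def IsLPM {α : Type*} (M : Matroid α) : Prop :=
  ∃ n r : ℕ, Nonempty (IntervalPres M n r)

/-- A terminal element: one that is least or greatest in some path order. -/
def IsTerminal {α : Type*} (M : Matroid α) (x : α) : Prop :=
  ∃ (n r : ℕ) (P : IntervalPres M n r) (i : Fin n),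
    P.e i = x ∧ (i.1 = 0 ∨ i.1 = n - 1)

/-- A nested matroid: a lattice path matroid with an interval presentation in which the set
of lower endpoints, or the set of upper endpoints, is an interval in the path order. -/
def IsNested {α : Type*} (M : Matroid α) : Prop :=
  ∃ (n r : ℕ) (P : IntervalPres M n r),
    (Set.range P.a).OrdConnected ∨ (Set.range P.b).OrdConnected

/-- `M` is (isomorphic to) the uniform matroid `U_{r,k}`: `k` elements, and the independent
sets are exactly the subsets of the ground set with at most `r` elements. -/
def IsUniformOf {α : Type*} (M : Matroid α) (r k : ℕ) : Prop :=
  M.E.Finite ∧ M.E.ncard = k ∧ ∀ I ⊆ M.E, (M.Indep I ↔ I.ncard ≤ r)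

/-- `M` is (isomorphic to) an `n`-element circuit `U_{n-1,n}`. -/
def IsCircuitMatroidOf {α : Type*} (M : Matroid α) (n : ℕ) : Prop :=
  IsUniformOf M (n - 1) n

/-- `N` is the truncation of `M` to rank `k`. -/
def IsTruncationOf {α : Type*} (N M : Matroid α) (k : ℕ) : Prop :=
  N.E = M.E ∧ ∀ I, N.Indep I ↔ (M.Indep I ∧ I.ncard ≤ k)

/-- `N` is the direct sum of `M₁` and `M₂`. -/
def IsDirectSumOf {α : Type*} (N M₁ M₂ : Matroid α) : Prop :=
  Disjoint M₁.E M₂.E ∧ N.E = M₁.E ∪ M₂.E ∧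
    ∀ I, N.Indep I ↔ (I ⊆ N.E ∧ M₁.Indep (I ∩ M₁.E) ∧ M₂.Indep (I ∩ M₂.E))

/-- `N` is the parallel connection `P_x(M₁, M₂)`, described by its bases. -/
def IsParallelConnOf {α : Type*} (N M₁ M₂ : Matroid α) (x : α) : Prop :=
  M₁.E ∩ M₂.E = {x} ∧ ¬ (M₁.IsLoop' x ∧ M₂.IsLoop' x) ∧ N.E = M₁.E ∪ M₂.E ∧
    ∀ B, N.IsBase B ↔
      ((x ∈ B ∧ M₁.IsBase (B ∩ M₁.E) ∧ M₂.IsBase (B ∩ M₂.E)) ∨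
       (x ∉ B ∧ ((M₁.IsBase (B ∩ M₁.E) ∧ M₂.IsBase ((B ∩ M₂.E) ∪ {x})) ∨
                 (M₂.IsBase (B ∩ M₂.E) ∧ M₁.IsBase ((B ∩ M₁.E) ∪ {x})))))

/-- `N` is the free extension `M + x` of `M` by the element `x`. -/
def IsFreeExtOf {α : Type*} (N M : Matroid α) (x : α) : Prop :=
  x ∉ M.E ∧ N.E = insert x M.E ∧
    ∀ I, N.Indep I ↔ (I ⊆ N.E ∧ ((x ∉ I ∧ M.Indep I) ∨
        (x ∈ I ∧ M.Indep (I \ {x}) ∧ ¬ M.Spanning (I \ {x}))))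

/-- `M` is (isomorphic to) `P_m`, the truncation to rank `m` of the direct sum of two
`m`-element circuits. -/
def IsPMat {α : Type*} (M : Matroid α) (m : ℕ) : Prop :=
  ∃ U₁ U₂ S : Matroid α, IsCircuitMatroidOf U₁ m ∧ IsCircuitMatroidOf U₂ m ∧
    IsDirectSumOf S U₁ U₂ ∧ IsTruncationOf M S m

/-- `M` is (isomorphic to) `P'_n`, the truncation to rank `n` of the parallel connection,
at a common element, of two `n`-element circuits. -/
def IsP'Mat {α : Type*} (M : Matroid α) (n : ℕ) : Prop :=
  ∃ (U₁ U₂ S : Matroid α) (x : α), IsCircuitMatroidOf U₁ n ∧ IsCircuitMatroidOf U₂ n ∧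
    IsParallelConnOf S U₁ U₂ x ∧ IsTruncationOf M S n

/-- `M` is (isomorphic to) `A_n = P'_n + x`. -/
def IsAMat {α : Type*} (M : Matroid α) (n : ℕ) : Prop :=
  ∃ (N : Matroid α) (x : α), IsP'Mat N n ∧ IsFreeExtOf M N x

/-- `M` is (isomorphic to) `B_{n,k} = T_n(U_{n-1,n} ⊕ U_{n-1,n} ⊕ U_{k-1,k})`. -/
def IsBMat {α : Type*} (M : Matroid α) (n k : ℕ) : Prop :=
  ∃ U₁ U₂ U₃ S₁ S₂ : Matroid α, IsCircuitMatroidOf U₁ n ∧ IsCircuitMatroidOf U₂ n ∧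
    IsUniformOf U₃ (k - 1) k ∧ IsDirectSumOf S₁ U₁ U₂ ∧ IsDirectSumOf S₂ S₁ U₃ ∧
    IsTruncationOf M S₂ n

/-- `M` is (isomorphic to) `C_{n+k,k}`, the dual of `B_{n,k}`. -/
def IsCMat {α : Type*} (M : Matroid α) (n k : ℕ) : Prop := IsBMat M✶ n k

/-- `M` is (isomorphic to) `D_n = (P_{n-1} ⊕ U_{1,1}) + x`. -/
def IsDMat {α : Type*} (M : Matroid α) (n : ℕ) : Prop :=
  ∃ (P U S : Matroid α) (x : α), IsPMat P (n - 1) ∧ IsUniformOf U 1 1 ∧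
    IsDirectSumOf S P U ∧ IsFreeExtOf M S x

/-- `M` is (isomorphic to) `E_n`, the dual of `D_n`. -/
def IsEMat {α : Type*} (M : Matroid α) (n : ℕ) : Prop := IsDMat M✶ n

/-- `M` is (isomorphic to) the rank-3 wheel `W_3`, the cycle matroid of `K₄`: six elements,
rank 3, whose dependent 3-sets are the four triangles of `K₄`. -/
def IsWheel3 {α : Type*} (M : Matroid α) : Prop :=
  ∃ a b c d e f : α, ({a, b, c, d, e, f} : Set α).ncard = 6 ∧
    M.E = {a, b, c, d, e, f} ∧
    ∀ X ⊆ M.E, (M.Indep X ↔ X.ncard ≤ 3 ∧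
      X ≠ {a, b, f} ∧ X ≠ {a, c, e} ∧ X ≠ {b, c, d} ∧ X ≠ {d, e, f})

/-- `M` is (isomorphic to) the rank-3 whirl `W^3`, obtained from `W_3` by relaxing a
circuit-hyperplane: six elements, rank 3, with exactly three dependent 3-sets. -/
def IsWhirl3 {α : Type*} (M : Matroid α) : Prop :=
  ∃ a b c d e f : α, ({a, b, c, d, e, f} : Set α).ncard = 6 ∧
    M.E = {a, b, c, d, e, f} ∧
    ∀ X ⊆ M.E, (M.Indep X ↔ X.ncard ≤ 3 ∧
      X ≠ {a, b, f} ∧ X ≠ {a, c, e} ∧ X ≠ {b, c, d})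

/-- `M` is (isomorphic to) `R_4`: the parallel extension, at `x`, of the rank-4 matroid on
six elements whose ground set is the union of two 4-element circuits `{x,y,p,q}` and
`{x,y,u,v}` meeting in the independent set `{x,y}`, these circuits being its only
nonspanning circuits. -/
def IsR4Mat {α : Type*} (M : Matroid α) : Prop :=
  ∃ (S U : Matroid α) (x x' y p q u v : α),
    ({x, x', y, p, q, u, v} : Set α).ncard = 7 ∧
    S.E = {x, y, p, q, u, v} ∧
    (∀ X ⊆ S.E, (S.Indep X ↔ X.ncard ≤ 4 ∧
        ¬ ({x, y, p, q} : Set α) ⊆ X ∧ ¬ ({x, y, u, v} : Set α) ⊆ X)) ∧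
    U.E = {x, x'} ∧ (∀ B, U.IsBase B ↔ (B = {x} ∨ B = {x'})) ∧
    IsParallelConnOf M S U x

/-- `M` is (isomorphic to) `R_3`, the dual of `R_4`. -/
def IsR3Mat {α : Type*} (M : Matroid α) : Prop := IsR4Mat M✶

/-- `M` is isomorphic to a matroid in the list `E` of excluded minors of `L`. -/
def InExcludedList {α : Type*} (M : Matroid α) : Prop :=
  (∃ n, 3 ≤ n ∧ IsAMat M n) ∨
  (∃ n k, 2 ≤ k ∧ k ≤ n ∧ (IsBMat M n k ∨ IsCMat M n k)) ∨
  (∃ n, 4 ≤ n ∧ (IsDMat M n ∨ IsEMat M n)) ∨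
  IsWheel3 M ∨ IsWhirl3 M ∨ IsR3Mat M ∨ IsR4Mat M

/-- `M` is an excluded minor of the class `L` of lattice path matroids. -/
def IsExcludedMinorOfLPM {α : Type*} (M : Matroid α) : Prop :=
  M.Finite ∧ ¬ IsLPM M ∧ ∀ N : Matroid α, N.IsMinorOf M → N ≠ M → IsLPM N

/-!
In both cases `x ∉ F`, `cl_M(F) ⊆ F ∪ {x}`, `F ∪ {x}` is dependent in `M`, and any two elements of
`F` lie on a common circuit of `M` inside `F ∪ {x}` (a circuit of `M ／ x` becomes one of `M` after
possibly adding `x`). Everything is then decided by whether `x ∈ cl_M(F)`, that is, whether `x`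
lies on a circuit inside `F ∪ {x}`. If it does, `F ∪ {x} = cl_M(F)` is a flat, and it is connected
because lying on a common circuit is a transitive relation; `F` is not closed. If it does not,
`F` is a flat, every linking circuit avoids `x`, so `M | F` is connected, and `x` is isolated in
`M | (F ∪ {x})`.
-/

namespace Matroid

variable {α : Type*} {M : Matroid α} {C C₁ C₂ D F K X Y : Set α} {e f x y z : α}

lemma isCircuit'_iff : M.IsCircuit' C ↔ M.IsCircuit C :=
  isCircuit_iff.symm

def CommonCircuitIn (M : Matroid α) (X : Set α) (y z : α) : Prop :=
  ∃ C ⊆ X, M.IsCircuit C ∧ y ∈ C ∧ z ∈ C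

lemma CommonCircuitIn.symm (h : M.CommonCircuitIn X y z) : M.CommonCircuitIn X z y :=
  let ⟨C, hCX, hC, hy, hz⟩ := h
  ⟨C, hCX, hC, hz, hy⟩

lemma CommonCircuitIn.mono (h : M.CommonCircuitIn X y z) (hXY : X ⊆ Y) :
    M.CommonCircuitIn Y y z :=
  let ⟨C, hCX, hC, hy, hz⟩ := h
  ⟨C, hCX.trans hXY, hC, hy, hz⟩

lemma CommonCircuitIn.of_delete (h : (M ＼ D).CommonCircuitIn X y z) :
    M.CommonCircuitIn X y z :=
  let ⟨C, hCX, hC, hy, hz⟩ := h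
  ⟨C, hCX, hC.of_delete, hy, hz⟩

lemma CommonCircuitIn.of_contract (h : (M ／ K).CommonCircuitIn X y z) :
    M.CommonCircuitIn (X ∪ K) y z :=
  let ⟨_, hCX, hC, hy, hz⟩ := h
  let ⟨C', hC', hCC', hC'CK⟩ := hC.exists_subset_isCircuit_of_contract
  ⟨C', hC'CK.trans (union_subset_union_left K hCX), hC', hCC' hy, hCC' hz⟩

lemma CommonCircuitIn.of_insert (h : M.CommonCircuitIn (insert x F) y z)
    (hx : x ∉ M.closure F) : M.CommonCircuitIn F y z := by
  obtain ⟨C, hCX, hC, hy, hz⟩ := h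
  have hxC : x ∉ C := fun hxC ↦ hx <| M.closure_subset_closure
    (sdiff_singleton_subset_iff.2 hCX) (hC.mem_closure_sdiff_singleton_of_mem hxC)
  exact ⟨C, (subset_insert_iff_of_notMem hxC).1 hCX, hC, hy, hz⟩

/-- The induction is on `|C₁ ∪ C₂|`; strong circuit elimination at a common element produces a
pair of circuits with smaller union. -/
lemma IsCircuit.commonCircuitIn_union [M.Finitary] (hC₁ : M.IsCircuit C₁) (hC₂ : M.IsCircuit C₂)
    (hC₁₂ : (C₁ ∩ C₂).Nonempty) (he : e ∈ C₁) (hf : f ∈ C₂) :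
    M.CommonCircuitIn (C₁ ∪ C₂) e f := by
  induction hn : (C₁ ∪ C₂).ncard using Nat.strong_induction_on generalizing C₁ C₂ with
  | _ n ih =>
  have of_smaller : ∀ D₁ D₂, M.IsCircuit D₁ → M.IsCircuit D₂ → (D₁ ∩ D₂).Nonempty →
      e ∈ D₁ → f ∈ D₂ → D₁ ∪ D₂ ⊂ C₁ ∪ C₂ → M.CommonCircuitIn (C₁ ∪ C₂) e f :=
    fun D₁ D₂ hD₁ hD₂ hD₁₂ he hf hss ↦
      (ih _ (hn ▸ ncard_lt_ncard hss (hC₁.finite.union hC₂.finite)) hD₁ hD₂ hD₁₂ he hf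
        rfl).mono hss.subset
  by_cases heC₂ : e ∈ C₂
  · exact ⟨C₂, subset_union_right, hC₂, heC₂, hf⟩
  by_cases hfC₁ : f ∈ C₁
  · exact ⟨C₁, subset_union_left, hC₁, he, hfC₁⟩
  obtain ⟨h, hh₁, hh₂⟩ := hC₁₂
  obtain ⟨C₃, hC₃ss, hC₃, heC₃⟩ := hC₁.strong_elimination hC₂ hh₁ hh₂ he heC₂
  obtain ⟨C₄, hC₄ss, hC₄, hfC₄⟩ := hC₂.strong_elimination hC₁ hh₂ hh₁ hf hfC₁
  rw [union_comm C₂] at hC₄ss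
  by_cases hC₃₄ : (C₃ ∩ C₄).Nonempty
  · exact of_smaller C₃ C₄ hC₃ hC₄ hC₃₄ heC₃ hfC₄ <|
      (ssubset_iff_of_subset ((union_subset hC₃ss hC₄ss).trans sdiff_subset)).2
        ⟨h, .inl hh₁, fun hh ↦ hh.elim (fun hh ↦ (hC₃ss hh).2 rfl) (fun hh ↦ (hC₄ss hh).2 rfl)⟩
  -- Otherwise the pair `C₁, C₄` is smaller: its union misses some `t ∈ C₃ \ C₁`, and it meets
  -- in some `s ∈ C₄ \ C₂`; both exist because `h ∈ C₁ ∩ C₂` lies in neither `C₃` nor `C₄`.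
  obtain ⟨t, htC₃, htC₁⟩ := not_subset.1 fun hss ↦
    (hC₃ss (hC₃.eq_of_subset_isCircuit hC₁ hss ▸ hh₁)).2 rfl
  obtain ⟨s, hsC₄, hsC₂⟩ := not_subset.1 fun hss ↦
    (hC₄ss (hC₄.eq_of_subset_isCircuit hC₂ hss ▸ hh₂)).2 rfl
  have htC₄ : t ∉ C₄ := fun htC₄ ↦ hC₃₄ ⟨t, htC₃, htC₄⟩
  exact of_smaller C₁ C₄ hC₁ hC₄ ⟨s, ((hC₄ss hsC₄).1).resolve_right hsC₂, hsC₄⟩ he hfC₄ <|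
    (ssubset_iff_of_subset (union_subset subset_union_left (hC₄ss.trans sdiff_subset))).2
      ⟨t, (hC₃ss htC₃).1, fun ht ↦ ht.elim htC₁ htC₄⟩

lemma CommonCircuitIn.trans [M.Finitary] (h₁ : M.CommonCircuitIn X x y)
    (h₂ : M.CommonCircuitIn X y z) : M.CommonCircuitIn X x z := by
  obtain ⟨C₁, hC₁X, hC₁, hx, hy₁⟩ := h₁
  obtain ⟨C₂, hC₂X, hC₂, hy₂, hz⟩ := h₂
  exact (hC₁.commonCircuitIn_union hC₂ ⟨y, hy₁, hy₂⟩ hx hz).mono (union_subset hC₁X hC₂X)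

lemma exists_commonCircuitIn_insert_iff (hx : M.IsNonloop x) (hxF : x ∉ F) :
    (∃ y ∈ F, M.CommonCircuitIn (insert x F) x y) ↔ x ∈ M.closure F := by
  rw [mem_closure_iff_exists_isCircuit hxF]
  refine ⟨fun ⟨_, _, C, hCX, hC, hxC, _⟩ ↦ ⟨C, hCX, hC, hxC⟩, fun ⟨C, hCX, hC, hxC⟩ ↦ ?_⟩
  obtain ⟨y, hyC, hyx⟩ : ∃ y ∈ C, y ≠ x := by
    by_contra! hCx
    exact hx.not_isLoop <| singleton_isCircuit.1 <|
      eq_singleton_iff_unique_mem.2 ⟨hxC, hCx⟩ ▸ hC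
  exact ⟨y, (hCX hyC).resolve_left hyx, C, hCX, hC, hxC, hyC⟩

lemma restrict_isConnected_iff (hX : X ⊆ M.E) :
    (M ↾ X).IsConnected ↔
      X.Nonempty ∧ ∀ y ∈ X, ∀ z ∈ X, y ≠ z → M.CommonCircuitIn X y z := by
  simp only [IsConnected, ConnTo, isCircuit'_iff, restrict_isCircuit_iff hX, restrict_ground_eq]
  refine and_congr_right fun _ ↦ ⟨fun h y hy z hz hyz ↦ ?_, fun h y z hy hz ↦ ?_⟩
  · obtain ⟨rfl, -⟩ | ⟨C, ⟨hC, hCX⟩, hyC, hzC⟩ := h hy hz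
    · exact absurd rfl hyz
    · exact ⟨C, hCX, hC, hyC, hzC⟩
  · obtain rfl | hyz := eq_or_ne y z
    · exact .inl ⟨rfl, hy⟩
    · obtain ⟨C, hCX, hC, hyC, hzC⟩ := h y hy z hz hyz
      exact .inr ⟨C, ⟨hC, hCX⟩, hyC, hzC⟩

lemma restrict_insert_isConnected [M.Finitary] (hX : insert x F ⊆ M.E)
    (hF : ∀ y ∈ F, ∀ z ∈ F, y ≠ z → M.CommonCircuitIn (insert x F) y z)
    (hx : ∃ y ∈ F, M.CommonCircuitIn (insert x F) x y) :
    (M ↾ insert x F).IsConnected := by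
  obtain ⟨y₀, hy₀, hxy₀⟩ := hx
  have hxF : ∀ y ∈ F, M.CommonCircuitIn (insert x F) x y := fun y hy ↦ by
    obtain rfl | hy₀y := eq_or_ne y₀ y
    · exact hxy₀
    · exact hxy₀.trans (hF y₀ hy₀ y hy hy₀y)
  refine (restrict_isConnected_iff hX).2 ⟨insert_nonempty x F, ?_⟩
  rintro y (rfl | hy) z (rfl | hz) hyz
  · exact absurd rfl hyz
  · exact hxF z hz
  · exact (hxF y hy).symm
  · exact hF y hy z hz hyz

lemma xor_pncFlat_insert [M.Finitary] (hx : M.IsNonloop x) (hF : F ⊂ M.E \ {x})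
    (hcl : M.closure F ⊆ insert x F) (hdep : M.Dep (insert x F))
    (hlink : ∀ y ∈ F, ∀ z ∈ F, y ≠ z → M.CommonCircuitIn (insert x F) y z) :
    Xor (M.PncFlat F) (M.PncFlat (insert x F)) := by
  have hxF : x ∉ F := fun h ↦ (hF.subset h).2 rfl
  have hFE : F ⊆ M.E := hF.subset.trans sdiff_subset
  have hproper : insert x F ⊂ M.E := by
    obtain ⟨z, hz, hzF⟩ := (ssubset_iff_of_subset hF.subset).1 hF
    exact (ssubset_iff_of_subset (insert_subset hx.mem_ground hFE)).2
      ⟨z, hz.1, fun h ↦ h.elim hz.2 hzF⟩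
  by_cases hxcl : x ∈ M.closure F
  · have hclF : M.closure F = insert x F :=
      hcl.antisymm (insert_subset hxcl (M.subset_closure F))
    refine .inr ⟨⟨hclF ▸ M.isFlat_closure F, hproper, hdep, restrict_insert_isConnected
      hproper.subset hlink ((exists_commonCircuitIn_insert_iff hx hxF).2 hxcl)⟩,
      fun hFpnc ↦ hxF (hFpnc.1.closure ▸ hxcl)⟩
  · have hclF : M.closure F = F := ((subset_insert_iff_of_notMem hxcl).1 hcl).antisymm
      (M.subset_closure F)
    have hFdep : M.Dep F := by
      refine (not_indep_iff hFE).1 fun hFi ↦ hdep.not_indep ?_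
      exact (hFi.insert_indep_iff_of_notMem hxF).2 ⟨hx.mem_ground, hxcl⟩
    obtain ⟨y, hy⟩ := hFdep.nonempty
    refine .inl ⟨⟨isFlat_iff_closure_eq.2 hclF, (subset_insert x F).trans_ssubset hproper,
      hFdep, (restrict_isConnected_iff hFE).2 ⟨⟨y, hy⟩,
        fun y hy z hz hyz ↦ (hlink y hy z hz hyz).of_insert hxcl⟩⟩, fun hXpnc ↦ hxcl ?_⟩
    have hxy := ((restrict_isConnected_iff hproper.subset).1 hXpnc.2.2.2).2 x (mem_insert x F)
      y (mem_insert_of_mem x hy) fun hxy ↦ hxF (hxy ▸ hy)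
    exact (exists_commonCircuitIn_insert_iff hx hxF).1 ⟨y, hy, hxy⟩

lemma xor_pncFlat_of_pncFlat_delete [M.Finitary] (hx : M.IsNonloop x)
    (hF : (M ＼ {x}).PncFlat F) : Xor (M.PncFlat F) (M.PncFlat (insert x F)) := by
  obtain ⟨hflat, hss, hdep, hconn⟩ := hF
  have hxF : x ∉ F := fun h ↦ (hss.subset h).2 rfl
  have hclF : M.closure F \ {x} = F := by
    rw [← sdiff_singleton_eq_self hxF, ← delete_closure_eq, sdiff_singleton_eq_self hxF,
      hflat.closure]
  refine xor_pncFlat_insert hx hss ?_ ((delete_dep_iff.1 hdep).1.superset (subset_insert x F)) ?_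
  · exact (subset_insert_sdiff_singleton x _).trans (by rw [hclF])
  · exact fun y hy z hz hyz ↦
      (((restrict_isConnected_iff hss.subset).1 hconn).2 y hy z hz hyz).of_delete.mono
        (subset_insert x F)

lemma xor_pncFlat_of_pncFlat_contract [M.Finitary] (hx : M.IsNonloop x)
    (hF : (M ／ {x}).PncFlat F) : Xor (M.PncFlat F) (M.PncFlat (insert x F)) := by
  obtain ⟨hflat, hss, hdep, hconn⟩ := hF
  have hcl : M.closure (insert x F) = insert x F := by
    have h := hflat.closure
    rw [contract_closure_eq, union_singleton] at h
    conv_rhs => rw [← h, insert_sdiff_singleton,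
      insert_eq_of_mem (M.mem_closure_of_mem' (mem_insert x F) hx.mem_ground)]
  refine xor_pncFlat_insert hx hss (hcl ▸ M.closure_subset_closure (subset_insert x F))
    (singleton_union ▸ hdep.of_contract (singleton_subset_iff.2 hx.mem_ground)) ?_
  exact fun y hy z hz hyz ↦ union_singleton ▸
    (((restrict_isConnected_iff hss.subset).1 hconn).2 y hy z hz hyz).of_contract

end Matroid

section Statements

variable {α : Type*}

theorem pnc_flat_of_deletion_contraction
    (M : Matroid α) (hfin : M.Finite) (x : α) (hx : x ∈ M.E) (hl : ¬ M.IsLoop' x) :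
    (∀ F : Set α, (M.del {x}).PncFlat F →
      Xor' (M.PncFlat F) (M.PncFlat (F ∪ {x}))) ∧
    (∀ F : Set α, (M.con {x}).PncFlat F →
      Xor' (M.PncFlat F) (M.PncFlat (F ∪ {x}))) := by
  have hnl : M.IsNonloop x := indep_singleton.1 <| not_not.1 fun h ↦ hl ⟨hx, h⟩
  simp only [union_singleton]
  exact ⟨fun F hF ↦ xor_pncFlat_of_pncFlat_delete hnl hF,
    fun F hF ↦ xor_pncFlat_of_pncFlat_contract hnl hF⟩

end Statements
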